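/- arXiv:2605.04148 — 6 statements merged into one kernel-verified Lean document; each statement's English description precedes it below -/
import Mathlib

section
/- Let $\mathcal{F}_{AB}$ be a complex symmetric matrix whose imaginary part $\mathrm{Im}(\mathcal{F}_{AB})$ is invertible, and let $m, n$ be real vectors with $\mathcal{F}_{AB} m^B = n_A$. Then $m = 0$ and $n = 0$. -/
/-- If a complex symmetric matrix `F` has invertible imaginary
part and `F.mulVec m = n` for real vectors `m`, `n`, then `m = 0` and `n = 0`. -/
theorem no_real_flux_solution_of_im_invertible
    (h : ℕ) (F : Matrix (Fin (h + 1)) (Fin (h + 1)) ℂ)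
    (hFsymm : F.IsSymm)
    (hinv : IsUnit (Matrix.of fun A B => (F A B).im))
    (m n : Fin (h + 1) → ℝ)
    (hmn : F.mulVec (fun B => (m B : ℂ)) = fun A => (n A : ℂ)) :
    m = 0 ∧ n = 0 := by
  set M : Matrix (Fin (h + 1)) (Fin (h + 1)) ℝ := Matrix.of fun A B => (F A B).im with hM
  have hMm : M.mulVec m = 0 := by
    funext A
    have := congrFun hmn A
    have him := congrArg Complex.im this
    simp only [Matrix.mulVec, dotProduct, Complex.im_sum, Complex.ofReal_im] at him
    simpa [Matrix.mulVec, dotProduct, hM, Complex.mul_im] using him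
  have hm : m = 0 := by
    have hinj := Matrix.mulVec_injective_iff_isUnit.mpr hinv
    have : M.mulVec m = M.mulVec 0 := by simp [hMm]
    exact hinj this
  refine ⟨hm, ?_⟩
  have : (fun A => (n A : ℂ)) = 0 := by
    rw [← hmn, hm]; funext A; simp [Matrix.mulVec, dotProduct]
  funext A
  have := congrFun this A
  simpa using this
end

section
/- Consider the large complex structure F-term equations $F_a = \partial_a \hat{W} - \frac{2 z_a}{C'} \hat{W} = 0$, with $\hat{W}$ the cubic flux superpotential with real coefficients $w, n'_0, n'_a, m^0, m^a$ and $z_a, C'$ as defined from the Kähler potential $\hat{K} = -\log(\frac{4}{3}\kappa + k)$. If $m^0 \neq 0$, then any solution satisfies $\mathrm{Im}(\hat{W}) = \frac{2 w m^0}{3} \kappa \left(1 + \frac{3k}{4\kappa}\right)$, where $\kappa = d_{abc} z^a z^b z^c$ evaluated at the solution. -/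
/-!
Contracting the F-term equations with the saxions `z^a` gives `∑ z^a ∂_a Ŵ = (3κ / 2κ') Ŵ`,
because `C'` cancels from `2 z_a / C'` and `z^a κ_a = κ`. The imaginary parts of `Ŵ` and of
`∑ z^a ∂_a Ŵ` are both `w` times the same axion-dependent combination
`X = n'_a z^a - d(m, z, χ) - (m⁰/2) d(z, χ, χ)` plus explicit multiples of `κ` and `k`, so
eliminating `X` leaves `(2κ' - 3κ) Im Ŵ = (2/3) w m⁰ κ' (2κ' - 3κ)`, and `2κ' - 3κ = -C' κ' ≠ 0`.
-/

open Finset Complex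

variable {ι : Type*}

section Components

variable (x y : ι → ℝ)

theorem re_comp_ofReal_add_mul_I : (fun a => ((x a : ℂ) + y a * I).re) = x := by
  ext; simp

theorem im_comp_ofReal_add_mul_I : (fun a => ((x a : ℂ) + y a * I).im) = y := by
  ext; simp

theorem re_comp_ofReal : (fun a => (x a : ℂ).re) = x := by
  ext; simp

theorem im_comp_ofReal : (fun a => (x a : ℂ).im) = fun _ => 0 := by
  ext; simp

end Components

theorem im_eq_of_ofReal_eq_I_mul_sub_conj {k : ℝ} {c : ℂ}
    (hk : (k : ℂ) = I * (c - (starRingEnd ℂ) c)) : c.im = -k / 2 := by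
  rw [sub_conj] at hk
  have hre := congrArg re hk
  simp at hre
  linarith

variable [Fintype ι]

def trilin {R : Type*} [CommSemiring R] (d : ι → ι → ι → R) (x y u : ι → R) : R :=
  ∑ a, ∑ b, ∑ e, d a b e * x a * y b * u e

section CommSemiring

variable {R : Type*} [CommSemiring R] {d : ι → ι → ι → R}

theorem sum_mul_sum_sum_eq_trilin (d : ι → ι → ι → R) (x y u : ι → R) :
    ∑ a, x a * ∑ b, ∑ e, d a b e * y b * u e = trilin d x y u := by
  simp only [trilin, mul_sum]
  congr! 3 with a _ b _ e _
  ring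

@[simp]
theorem trilin_zero_left (y u : ι → R) : trilin d (fun _ => 0) y u = 0 := by
  simp [trilin]

@[simp]
theorem trilin_zero_middle (x u : ι → R) : trilin d x (fun _ => 0) u = 0 := by
  simp [trilin]

theorem trilin_comm_left (h : ∀ a b e, d a b e = d b a e) (x y u : ι → R) :
    trilin d x y u = trilin d y x u := by
  rw [trilin, trilin, sum_comm]
  congr! 3 with a _ b _ e _
  rw [h]
  ring

theorem trilin_comm_right (h : ∀ a b e, d a b e = d a e b) (x y u : ι → R) :
    trilin d x y u = trilin d x u y := by
  unfold trilin
  congr! 1 with a _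
  rw [sum_comm]
  congr! 2 with b _ e _
  rw [h]
  ring

end CommSemiring

theorem re_trilin_ofReal (d : ι → ι → ι → ℝ) (X Y U : ι → ℂ) :
    (trilin (fun a b e => (d a b e : ℂ)) X Y U).re =
      trilin d (fun a => (X a).re) (fun a => (Y a).re) (fun a => (U a).re)
      - trilin d (fun a => (X a).re) (fun a => (Y a).im) (fun a => (U a).im)
      - trilin d (fun a => (X a).im) (fun a => (Y a).re) (fun a => (U a).im)
      - trilin d (fun a => (X a).im) (fun a => (Y a).im) (fun a => (U a).re) := by
  simp only [trilin, re_sum, ← sum_sub_distrib]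
  congr! 3 with a _ b _ e _
  simp only [mul_re, mul_im, ofReal_re, ofReal_im]
  ring

theorem im_trilin_ofReal (d : ι → ι → ι → ℝ) (X Y U : ι → ℂ) :
    (trilin (fun a b e => (d a b e : ℂ)) X Y U).im =
      trilin d (fun a => (X a).im) (fun a => (Y a).re) (fun a => (U a).re)
      + trilin d (fun a => (X a).re) (fun a => (Y a).im) (fun a => (U a).re)
      + trilin d (fun a => (X a).re) (fun a => (Y a).re) (fun a => (U a).im)
      - trilin d (fun a => (X a).im) (fun a => (Y a).im) (fun a => (U a).im) := by
  simp only [trilin, im_sum, ← sum_sub_distrib, ← sum_add_distrib]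
  congr! 3 with a _ b _ e _
  simp only [mul_re, mul_im, ofReal_re, ofReal_im]
  ring

section Superpotential

variable (d : ι → ι → ι → ℝ) (w n₀ m₀ : ℝ) (c : ℂ) (n m : ι → ℝ) (Z : ι → ℂ)

noncomputable def fluxSuperpotential : ℂ :=
  w * (n₀ - m₀ * c + I * ∑ a, n a * Z a
    - 1 / 2 * trilin (fun a b e => (d a b e : ℂ)) (fun a => (m a : ℂ)) Z Z
    + I * m₀ / 6 * trilin (fun a b e => (d a b e : ℂ)) Z Z Z)

/-- `∂ Ŵ / ∂ Z^a` when `d` is symmetric. -/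
noncomputable def fluxSuperpotentialGrad (a : ι) : ℂ :=
  w * (I * n a - ∑ b, ∑ e, (d a b e : ℂ) * m b * Z e
    + I * m₀ / 2 * ∑ b, ∑ e, (d a b e : ℂ) * Z b * Z e)

theorem sum_mul_fluxSuperpotentialGrad (x : ι → ℂ) :
    ∑ a, x a * fluxSuperpotentialGrad d w m₀ n m Z a =
      w * (I * ∑ a, n a * x a
        - trilin (fun a b e => (d a b e : ℂ)) x (fun a => (m a : ℂ)) Z
        + I * m₀ / 2 * trilin (fun a b e => (d a b e : ℂ)) x Z Z) := by
  have hterm : ∀ a, x a * fluxSuperpotentialGrad d w m₀ n m Z a =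
      w * (I * (n a * x a) - x a * ∑ b, ∑ e, (d a b e : ℂ) * m b * Z e
        + I * m₀ / 2 * (x a * ∑ b, ∑ e, (d a b e : ℂ) * Z b * Z e)) := fun a => by
    rw [fluxSuperpotentialGrad]
    ring
  simp only [hterm, ← mul_sum, sum_add_distrib, sum_sub_distrib, sum_mul_sum_sum_eq_trilin]

variable {d} (z χ : ι → ℝ)

theorem im_fluxSuperpotential (h₁ : ∀ a b e, d a b e = d b a e)
    (h₂ : ∀ a b e, d a b e = d a e b) :
    (fluxSuperpotential d w n₀ m₀ c n m (fun a => z a + χ a * I)).im =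
      w * (∑ a, n a * z a - trilin d m z χ - m₀ / 2 * trilin d z χ χ
        + m₀ / 6 * trilin d z z z - m₀ * c.im) := by
  have hχzχ : trilin d χ z χ = trilin d z χ χ := trilin_comm_left h₁ ..
  have hχχz : trilin d χ χ z = trilin d z χ χ := by
    rw [← trilin_comm_right h₂, hχzχ]
  have hmχz : trilin d m χ z = trilin d m z χ := trilin_comm_right h₂ ..
  rw [fluxSuperpotential, im_ofReal_mul]
  simp only [add_im, sub_im, mul_im, mul_re, ofReal_re, ofReal_im, I_re, I_im, im_sum,
    div_ofNat_re, div_ofNat_im, one_re, one_im]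
  -- the component lemmas only match before `simp` rewrites inside the lambdas
  simp only [re_trilin_ofReal, im_trilin_ofReal, re_comp_ofReal_add_mul_I,
    im_comp_ofReal_add_mul_I, re_comp_ofReal, im_comp_ofReal, trilin_zero_left, hχzχ, hχχz, hmχz]
  simp only [re_sum, add_re, mul_re, ofReal_re, ofReal_im, I_re, mul_zero, zero_mul, sub_zero,
    add_zero]
  ring

theorem im_sum_mul_fluxSuperpotentialGrad (h₁ : ∀ a b e, d a b e = d b a e) :
    (∑ a, (z a : ℂ) * fluxSuperpotentialGrad d w m₀ n m (fun a => z a + χ a * I) a).im =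
      w * (∑ a, n a * z a - trilin d m z χ + m₀ / 2 * (trilin d z z z - trilin d z χ χ)) := by
  rw [sum_mul_fluxSuperpotentialGrad, im_ofReal_mul, trilin_comm_left h₁ m]
  simp only [add_im, sub_im, mul_im, mul_re, ofReal_re, ofReal_im, I_re, I_im, im_sum,
    div_ofNat_re, div_ofNat_im]
  simp only [re_trilin_ofReal, im_trilin_ofReal, re_comp_ofReal_add_mul_I,
    im_comp_ofReal_add_mul_I, re_comp_ofReal, im_comp_ofReal, trilin_zero_left, trilin_zero_middle]
  simp only [re_sum, mul_re, ofReal_re, ofReal_im, mul_zero, zero_mul, sub_zero, add_zero]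
  ring

end Superpotential

theorem sum_mul_eq_of_fterm_eq_zero {W : ℂ} {dW : ι → ℂ} {z κa za : ι → ℝ} {κ' C' : ℝ}
    (hκ' : κ' ≠ 0) (hC' : C' ≠ 0) (hza : ∀ a, za a = 3 * κa a / (4 * κ') * C')
    (hF : ∀ a, dW a - 2 * (za a : ℂ) / C' * W = 0) :
    ∑ a, (z a : ℂ) * dW a = ((3 * ∑ a, z a * κa a) / (2 * κ') : ℝ) * W := by
  have hcoeff : ∀ a, 2 * za a / C' = 3 * κa a / (2 * κ') := fun a => by
    rw [hza]
    field_simp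
    ring
  rw [mul_sum, sum_div, ofReal_sum, sum_mul]
  refine sum_congr rfl fun a _ => ?_
  have hcoeffℂ := congrArg ((↑) : ℝ → ℂ) (hcoeff a)
  push_cast at hcoeffℂ ⊢
  rw [sub_eq_zero.mp (hF a), hcoeffℂ]
  ring

theorem lcs_fterm_im_W_value_general
    (h : ℕ) (d : Fin h → Fin h → Fin h → ℝ)
    (hd : ∀ a b c, d a b c = d b a c ∧ d a b c = d a c b)
    (w k n0' m0 : ℝ) (c : ℂ) (hck : (k : ℂ) = Complex.I * (c - (starRingEnd ℂ) c))
    (n' m : Fin h → ℝ) (z χ : Fin h → ℝ)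
    (Z : Fin h → ℂ) (hZ : Z = fun a => (z a : ℂ) + (χ a : ℂ) * Complex.I)
    (κ : ℝ) (hκ : κ = ∑ a, ∑ b, ∑ e, d a b e * z a * z b * z e)
    (κ' : ℝ) (hκ' : κ' = κ + 3 * k / 4) (hκ'pos : 0 < κ')
    (κa : Fin h → ℝ) (hκa : κa = fun a => ∑ b, ∑ e, d a b e * z b * z e)
    (C' : ℝ) (hC' : C' = 1 - 9 * k / (4 * κ')) (hC'ne : C' ≠ 0)
    (za : Fin h → ℝ) (hza : za = fun a => (3 * κa a / (4 * κ')) * C')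
    (hκne : κ ≠ 0)
    (W : ℂ)
    (hW : W = (w : ℂ) * ((n0' : ℂ) - (m0 : ℂ) * c
      + Complex.I * ∑ a, (n' a : ℂ) * Z a
      - (1 / 2) * ∑ a, ∑ b, ∑ e, (d a b e : ℂ) * (m a : ℂ) * Z b * Z e
      + (Complex.I * (m0 : ℂ) / 6) * ∑ a, ∑ b, ∑ e, (d a b e : ℂ) * Z a * Z b * Z e))
    (dW : Fin h → ℂ)
    (hdW : dW = fun a => (w : ℂ) * (Complex.I * (n' a : ℂ)
      - ∑ b, ∑ e, (d a b e : ℂ) * (m b : ℂ) * Z e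
      + (Complex.I * (m0 : ℂ) / 2) * ∑ b, ∑ e, (d a b e : ℂ) * Z b * Z e))
    (hF : ∀ a, dW a - (2 * (za a : ℂ) / (C' : ℂ)) * W = 0) :
    W.im = (2 * w * m0 / 3) * κ * (1 + 3 * k / (4 * κ)) := by
  obtain ⟨h₁, h₂⟩ : (∀ a b e, d a b e = d b a e) ∧ ∀ a b e, d a b e = d a e b :=
    ⟨fun a b e => (hd a b e).1, fun a b e => (hd a b e).2⟩
  subst hZ
  have hκ_trilin : κ = trilin d z z z := hκ
  have hWim : W.im = w * (∑ a, n' a * z a - trilin d m z χ - m0 / 2 * trilin d z χ χ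
      + m0 * κ / 6 + m0 * k / 2) := by
    have hW' : W = fluxSuperpotential d w n0' m0 c n' m _ := hW
    rw [hW', im_fluxSuperpotential _ _ _ _ _ _ _ _ h₁ h₂, im_eq_of_ofReal_eq_I_mul_sub_conj hck,
      ← hκ_trilin]
    ring
  have hzκa : ∑ a, z a * κa a = κ := by
    subst hκa
    rw [hκ_trilin, sum_mul_sum_sum_eq_trilin]
  have hcontr_im := congrArg im
    (sum_mul_eq_of_fterm_eq_zero (z := z) hκ'pos.ne' hC'ne (fun a => by rw [hza]) hF)
  rw [show dW = fluxSuperpotentialGrad d w m0 n' m _ from hdW,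
    im_sum_mul_fluxSuperpotentialGrad _ _ _ _ _ _ h₁, im_ofReal_mul, hzκa, ← hκ_trilin]
    at hcontr_im
  rw [div_mul_eq_mul_div (3 * κ), eq_div_iff (by positivity)] at hcontr_im
  have hdeg : 2 * κ' - 3 * κ ≠ 0 := fun h0 => hC'ne (by rw [hC']; field_simp; linarith)
  have hIm : W.im = 2 * w * m0 * κ' / 3 := by
    refine mul_right_cancel₀ hdeg ?_
    linear_combination (2 * κ') * hWim + hcontr_im - (4 / 3 * w * m0 * κ') * hκ'
  rw [hIm, hκ']
  field_simp

/-- For the large complex structure F-term equations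
`F_a = ∂_a Ŵ - (2 z_a / C') Ŵ = 0` with the cubic flux superpotential and
`m⁰ ≠ 0`, any solution satisfies `Im Ŵ = (2 w m⁰/3) κ (1 + 3k/(4κ))`.
Here `c̃` is the complex constant of the prepotential with `k = i(c̃ - c̃*)`. -/
theorem lcs_fterm_im_W_value
    (h : ℕ) (d : Fin h → Fin h → Fin h → ℝ)
    (hd : ∀ a b c, d a b c = d b a c ∧ d a b c = d a c b)
    (w k n0' m0 : ℝ) (c : ℂ) (hck : (k : ℂ) = Complex.I * (c - (starRingEnd ℂ) c))
    (n' m : Fin h → ℝ) (z χ : Fin h → ℝ)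
    (Z : Fin h → ℂ) (hZ : Z = fun a => (z a : ℂ) + (χ a : ℂ) * Complex.I)
    (κ : ℝ) (hκ : κ = ∑ a, ∑ b, ∑ e, d a b e * z a * z b * z e)
    (κ' : ℝ) (hκ' : κ' = κ + 3 * k / 4) (hκ'pos : 0 < κ')
    (κa : Fin h → ℝ) (hκa : κa = fun a => ∑ b, ∑ e, d a b e * z b * z e)
    (C' : ℝ) (hC' : C' = 1 - 9 * k / (4 * κ')) (hC'ne : C' ≠ 0)
    (za : Fin h → ℝ) (hza : za = fun a => (3 * κa a / (4 * κ')) * C')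
    (hκne : κ ≠ 0) (hm0 : m0 ≠ 0)
    (W : ℂ)
    (hW : W = (w : ℂ) * ((n0' : ℂ) - (m0 : ℂ) * c
      + Complex.I * ∑ a, (n' a : ℂ) * Z a
      - (1 / 2) * ∑ a, ∑ b, ∑ e, (d a b e : ℂ) * (m a : ℂ) * Z b * Z e
      + (Complex.I * (m0 : ℂ) / 6) * ∑ a, ∑ b, ∑ e, (d a b e : ℂ) * Z a * Z b * Z e))
    (dW : Fin h → ℂ)
    (hdW : dW = fun a => (w : ℂ) * (Complex.I * (n' a : ℂ)
      - ∑ b, ∑ e, (d a b e : ℂ) * (m b : ℂ) * Z e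
      + (Complex.I * (m0 : ℂ) / 2) * ∑ b, ∑ e, (d a b e : ℂ) * Z b * Z e))
    (hF : ∀ a, dW a - (2 * (za a : ℂ) / (C' : ℂ)) * W = 0) :
    W.im = (2 * w * m0 / 3) * κ * (1 + 3 * k / (4 * κ)) :=
  lcs_fterm_im_W_value_general h d hd w k n0' m0 c hck n' m z χ Z hZ κ hκ κ' hκ' hκ'pos κa hκa C'
    hC' hC'ne za hza hκne W hW dW hdW hF
end

section
/- In the large complex structure setting with $m^0 = 0$, suppose the F-term equations hold, so that (imaginary parts) $M_{ab} \chi^b = n'_a$ with $M_{ab} = d_{abc} m^c$, and (real parts) $\frac{2 (m^b z_b) z^a}{C'^2} + 3\tilde{n}_0 \frac{z^a}{C' \kappa'} = m^a$ where $\tilde{n}_0 = n'_0 - \frac{1}{2} n'_a \chi^a$. If $\tilde{n}_0 = 0$, then $m^a = 0$ for all $a$, $n'_a = 0$ for all $a$, and $n'_0 = 0$, i.e.\ all fluxes vanish. -/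
/-! With `ñ₀ = 0` the real F-term equation says `m = (2 S / C'²) z`, where `S = m^b z_b`.
Contracting with `z_a = 3 C' κ_a / (4 κ')` and using `κ_a z^a = κ` gives `S = 3 κ S / (2 C' κ')`;
since `C' κ' = κ - 3k/2`, this reads `S (κ + 3k) = 0`, so `S = 0` and hence `m = 0`.
Then `n'_a = M_{ab} χ^b = 0` and `n'₀ = ñ₀ + ½ n'_a χ^a = 0`. -/

open Finset

section Contraction

variable {ι : Type*} [Fintype ι]

theorem sum_contract_mul_eq_cubic (d : ι → ι → ι → ℝ) (z : ι → ℝ) :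
    ∑ a, (∑ b, ∑ e, d a b e * z b * z e) * z a = ∑ a, ∑ b, ∑ e, d a b e * z a * z b * z e := by
  simp only [sum_mul]
  exact sum_congr rfl fun a _ => sum_congr rfl fun b _ => sum_congr rfl fun e _ => by ring

theorem sum_mul_eq_mul_sum_of_forall_eq_mul {m z : ι → ℝ} {t : ℝ} (hm : ∀ a, m a = t * z a)
    (w : ι → ℝ) : ∑ a, m a * w a = t * ∑ a, z a * w a := by
  simp_rw [hm, mul_assoc, ← mul_sum]

end Contraction

theorem eq_zero_of_eq_contracted_real_fterm {S κ k κ' C' : ℝ} (hκ' : κ' = κ + 3 * k / 4)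
    (hκ'ne : κ' ≠ 0) (hC' : C' = 1 - 9 * k / (4 * κ')) (hC'ne : C' ≠ 0) (hκ3k : κ + 3 * k ≠ 0)
    (hS : S = 2 * S / C' ^ 2 * (3 * C' / (4 * κ') * κ)) : S = 0 := by
  have hCκ' : C' * κ' = κ - 3 * k / 2 := by
    rw [hC']; field_simp; rw [hκ']; ring
  have hS' : 2 * S * (C' * κ') = 3 * S * κ := by
    field_simp at hS; linear_combination hS / 2
  have : S * (κ + 3 * k) = 0 := by
    rw [hCκ'] at hS'; linear_combination -hS'
  exact (mul_eq_zero.mp this).resolve_right hκ3k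

theorem lcs_m0_zero_degenerate_case_general
    (h : ℕ) (d : Fin h → Fin h → Fin h → ℝ)
    (k n0' : ℝ) (n' m : Fin h → ℝ) (z χ : Fin h → ℝ)
    (κ : ℝ) (hκ : κ = ∑ a, ∑ b, ∑ e, d a b e * z a * z b * z e)
    (κa : Fin h → ℝ) (hκa : κa = fun a => ∑ b, ∑ e, d a b e * z b * z e)
    (κ' : ℝ) (hκ' : κ' = κ + 3 * k / 4) (hκ'pos : 0 < κ')
    (C' : ℝ) (hC' : C' = 1 - 9 * k / (4 * κ')) (hC'ne : C' ≠ 0)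
    (hκ3k : κ + 3 * k ≠ 0)
    (za : Fin h → ℝ) (hza : za = fun a => (3 * κa a / (4 * κ')) * C')
    (ntilde0 : ℝ) (hntilde0 : ntilde0 = n0' - (1 / 2) * ∑ a, n' a * χ a)
    (hIm : ∀ a, ∑ b, (∑ e, d a b e * m e) * χ b = n' a)
    (hRe : ∀ a, 2 * (∑ b, m b * za b) * z a / C' ^ 2 + 3 * ntilde0 * z a / (C' * κ') = m a)
    (h0 : ntilde0 = 0) :
    (∀ a, m a = 0) ∧ (∀ a, n' a = 0) ∧ n0' = 0 := by
  set S := ∑ b, m b * za b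
  have hm : ∀ a, m a = 2 * S / C' ^ 2 * z a := fun a => by rw [← hRe a, h0]; ring
  have hzza : ∑ a, z a * za a = 3 * C' / (4 * κ') * κ := by
    rw [hκ, ← sum_contract_mul_eq_cubic, mul_sum, hza, hκa]
    exact sum_congr rfl fun a _ => by ring
  have hS0 : S = 0 := by
    refine eq_zero_of_eq_contracted_real_fterm hκ' hκ'pos.ne' hC' hC'ne hκ3k ?_
    rw [← hzza]
    exact sum_mul_eq_mul_sum_of_forall_eq_mul hm za
  have hm0 : ∀ a, m a = 0 := fun a => by rw [hm a, hS0]; ring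
  have hn'0 : ∀ a, n' a = 0 := fun a => by simp [← hIm a, hm0]
  refine ⟨hm0, hn'0, ?_⟩
  simp only [hn'0, zero_mul, sum_const_zero, mul_zero, sub_zero, h0] at hntilde0
  exact hntilde0.symm

/-- In the large complex structure setting with `m⁰ = 0`, if the
imaginary F-term equations `M_{ab} χ^b = n'_a` (with `M_{ab} = d_{abc} m^c`) and the
real F-term equations `2(m^b z_b) z^a / C'² + 3 ñ₀ z^a/(C' κ') = m^a` hold and
`ñ₀ = n'₀ - ½ n'_a χ^a = 0`, then all fluxes vanish: `m^a = 0`, `n'_a = 0`, `n'₀ = 0`. -/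
theorem lcs_m0_zero_degenerate_case
    (h : ℕ) (d : Fin h → Fin h → Fin h → ℝ)
    (hd : ∀ a b c, d a b c = d b a c ∧ d a b c = d a c b)
    (k n0' : ℝ) (n' m : Fin h → ℝ) (z χ : Fin h → ℝ) (hz : z ≠ 0)
    (κ : ℝ) (hκ : κ = ∑ a, ∑ b, ∑ e, d a b e * z a * z b * z e)
    (κa : Fin h → ℝ) (hκa : κa = fun a => ∑ b, ∑ e, d a b e * z b * z e)
    (κ' : ℝ) (hκ' : κ' = κ + 3 * k / 4) (hκ'pos : 0 < κ')
    (C' : ℝ) (hC' : C' = 1 - 9 * k / (4 * κ')) (hC'ne : C' ≠ 0)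
    (hκ3k : κ + 3 * k ≠ 0)
    (za : Fin h → ℝ) (hza : za = fun a => (3 * κa a / (4 * κ')) * C')
    (ntilde0 : ℝ) (hntilde0 : ntilde0 = n0' - (1 / 2) * ∑ a, n' a * χ a)
    (hIm : ∀ a, ∑ b, (∑ e, d a b e * m e) * χ b = n' a)
    (hRe : ∀ a, 2 * (∑ b, m b * za b) * z a / C' ^ 2 + 3 * ntilde0 * z a / (C' * κ') = m a)
    (h0 : ntilde0 = 0) :
    (∀ a, m a = 0) ∧ (∀ a, n' a = 0) ∧ n0' = 0 :=
  lcs_m0_zero_degenerate_case_general h d k n0' n' m z χ κ hκ κa hκa κ' hκ' hκ'pos C' hC' hC'ne hκ3k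
    za hza ntilde0 hntilde0 hIm hRe h0
end

section
/- In the large complex structure setting with $m^0 = 0$ and $\tilde{n}_0 \neq 0$, the real F-term equations $\frac{2 (m^b z_b) z^a}{C'^2} + 3\tilde{n}_0 \frac{z^a}{C'\kappa'} = m^a$ imply $z^a = -\frac{\kappa'}{6 \tilde{n}_0} C_2 m^a$ where $C_2 = \frac{4(\kappa + 3k)}{4\kappa + 3k}$, and consequently $\kappa = -\frac{\kappa(m)}{(6\tilde{n}_0)^3} \kappa'^3 C_2^3$ where $\kappa(m) = d_{abc} m^a m^b m^c$, as well as $m^b z_b = -\frac{9 \tilde{n}_0}{2 \kappa'} C_1$ with $C_1 = \frac{2\kappa(2\kappa - 3k)}{(4\kappa + 3k)(\kappa + 3k)}$. -/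
/-!
Contracting the F-term equation `A z^a = m^a`, whose coefficient
`A = 2 (m^b z_b)/C'² + 3 ñ₀/(C' κ')` depends on `z` only through scalars, with `z_a` turns it into
the scalar equation `m^b z_b = A · 3 C' κ/(4 κ')`, because `z^a κ_a = κ`. Since `C' κ' = κ - 3k/2`,
the two scalar relations determine `A = -6 ñ₀/(κ + 3k)`, so `z^a = m^a / A` is proportional to `m^a`,
and `κ` is recovered from the homogeneity of the cubic form.
-/

open Finset

section

variable {ι R : Type*} [Fintype ι] [CommSemiring R]

def cubicForm (d : ι → ι → ι → R) (z : ι → R) : R :=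
  ∑ a, ∑ b, ∑ e, d a b e * z a * z b * z e

theorem sum_mul_contract_eq_cubicForm (d : ι → ι → ι → R) (z : ι → R) :
    ∑ a, z a * ∑ b, ∑ e, d a b e * z b * z e = cubicForm d z := by
  simp only [cubicForm, mul_sum]
  ac_rfl

theorem cubicForm_smul (d : ι → ι → ι → R) (t : R) (m : ι → R) :
    cubicForm d (fun a => t * m a) = t ^ 3 * cubicForm d m := by
  simp only [cubicForm, mul_sum]
  exact sum_congr rfl fun a _ => sum_congr rfl fun b _ => sum_congr rfl fun e _ => by ring

theorem sum_mul_eq_mul_sum_of_forall_mul_eq {A : R} {z m : ι → R} (hzm : ∀ a, A * z a = m a)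
    (w : ι → R) : ∑ b, m b * w b = A * ∑ b, z b * w b := by
  simp only [← hzm, mul_sum, mul_assoc]

end

theorem fterm_coeff_eq {κ k κ' C' n S A : ℝ} (hκ' : κ' = κ + 3 * k / 4) (hκ'ne : κ' ≠ 0)
    (hC' : C' = 1 - 9 * k / (4 * κ')) (hC'ne : C' ≠ 0) (hκ3k : κ + 3 * k ≠ 0)
    (hA : A = 2 * S / C' ^ 2 + 3 * n / (C' * κ')) (hS : S = A * (3 * C' / (4 * κ') * κ)) :
    A = -6 * n / (κ + 3 * k) := by
  have hCκ' : C' * κ' = κ - 3 * k / 2 := by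
    rw [hC']; field_simp; linear_combination 8 * hκ'
  have hA' : 2 * C' * κ' * A = 3 * κ * A + 6 * n := by
    rw [hS] at hA
    field_simp at hA
    linear_combination hA / 2
  rw [eq_div_iff hκ3k]
  linear_combination -hA' + 2 * A * hCκ'

theorem lcs_m0_zero_saxion_solution_general
    (h : ℕ) (d : Fin h → Fin h → Fin h → ℝ)
    (k : ℝ) (m : Fin h → ℝ) (z : Fin h → ℝ)
    (κ : ℝ) (hκ : κ = ∑ a, ∑ b, ∑ e, d a b e * z a * z b * z e)
    (κa : Fin h → ℝ) (hκa : κa = fun a => ∑ b, ∑ e, d a b e * z b * z e)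
    (κm : ℝ) (hκm : κm = ∑ a, ∑ b, ∑ e, d a b e * m a * m b * m e)
    (κ' : ℝ) (hκ' : κ' = κ + 3 * k / 4) (hκ'pos : 0 < κ')
    (C' : ℝ) (hC' : C' = 1 - 9 * k / (4 * κ')) (hC'ne : C' ≠ 0)
    (hκ3k : κ + 3 * k ≠ 0)
    (C1 : ℝ) (hC1 : C1 = 2 * κ * (2 * κ - 3 * k) / ((4 * κ + 3 * k) * (κ + 3 * k)))
    (C2 : ℝ) (hC2 : C2 = 4 * (κ + 3 * k) / (4 * κ + 3 * k))
    (za : Fin h → ℝ) (hza : za = fun a => (3 * κa a / (4 * κ')) * C')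
    (ntilde0 : ℝ) (hntilde0 : ntilde0 ≠ 0)
    (hRe : ∀ a, 2 * (∑ b, m b * za b) * z a / C' ^ 2
      + 3 * ntilde0 * z a / (C' * κ') = m a) :
    (∀ a, z a = -(κ' / (6 * ntilde0)) * C2 * m a)
    ∧ κ = -(κm / (6 * ntilde0) ^ 3) * κ' ^ 3 * C2 ^ 3
    ∧ ∑ b, m b * za b = -(9 * ntilde0 / (2 * κ')) * C1 := by
  set S := ∑ b, m b * za b with hSdef
  set A := 2 * S / C' ^ 2 + 3 * ntilde0 / (C' * κ') with hA
  have hκ'ne : κ' ≠ 0 := hκ'pos.ne'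
  have h4κ3k : 4 * κ + 3 * k = 4 * κ' := by rw [hκ']; ring
  have hAz : ∀ a, A * z a = m a := fun a => by rw [← hRe a]; ring
  have hκz : κ = ∑ a, z a * κa a := by rw [hκa, sum_mul_contract_eq_cubicForm]; exact hκ
  have hzza : ∑ b, z b * za b = 3 * C' / (4 * κ') * κ := by
    rw [hκz, mul_sum]
    exact sum_congr rfl fun b _ => by rw [hza]; ring
  have hS : S = A * (3 * C' / (4 * κ') * κ) := by
    rw [hSdef, sum_mul_eq_mul_sum_of_forall_mul_eq hAz, hzza]
  have hAval : A = -6 * ntilde0 / (κ + 3 * k) := fterm_coeff_eq hκ' hκ'ne hC' hC'ne hκ3k hA hS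
  have hz : ∀ a, z a = -(κ' / (6 * ntilde0)) * C2 * m a := fun a => by
    rw [← hAz a, hAval, hC2, h4κ3k]
    field_simp
  refine ⟨hz, ?_, ?_⟩
  · calc κ = cubicForm d z := hκ
      _ = cubicForm d fun a => -(κ' / (6 * ntilde0)) * C2 * m a := by rw [← funext hz]
      _ = _ := by rw [cubicForm_smul, hκm, cubicForm]; ring
  · rw [hS, hAval, hC1, h4κ3k, hC']
    field_simp
    linear_combination (-72 * κ) * hκ'

/-- In the large complex structure setting with `m⁰ = 0` and
`ñ₀ ≠ 0`, the real F-term equations `2(m^b z_b) z^a/C'² + 3 ñ₀ z^a/(C'κ') = m^a`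
imply `z^a = -(κ'/(6ñ₀)) C₂ m^a` with `C₂ = 4(κ+3k)/(4κ+3k)`, hence
`κ = -(κ(m)/(6ñ₀)³) κ'³ C₂³` with `κ(m) = d_{abc} m^a m^b m^c`, and
`m^b z_b = -(9ñ₀/(2κ')) C₁` with `C₁ = 2κ(2κ-3k)/((4κ+3k)(κ+3k))`. -/
theorem lcs_m0_zero_saxion_solution
    (h : ℕ) (d : Fin h → Fin h → Fin h → ℝ)
    (hd : ∀ a b c, d a b c = d b a c ∧ d a b c = d a c b)
    (k : ℝ) (m : Fin h → ℝ) (z : Fin h → ℝ)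
    (κ : ℝ) (hκ : κ = ∑ a, ∑ b, ∑ e, d a b e * z a * z b * z e)
    (κa : Fin h → ℝ) (hκa : κa = fun a => ∑ b, ∑ e, d a b e * z b * z e)
    (κm : ℝ) (hκm : κm = ∑ a, ∑ b, ∑ e, d a b e * m a * m b * m e)
    (κ' : ℝ) (hκ' : κ' = κ + 3 * k / 4) (hκ'pos : 0 < κ')
    (C' : ℝ) (hC' : C' = 1 - 9 * k / (4 * κ')) (hC'ne : C' ≠ 0)
    (hκ3k : κ + 3 * k ≠ 0) (h4κ3k : 4 * κ + 3 * k ≠ 0)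
    (C1 : ℝ) (hC1 : C1 = 2 * κ * (2 * κ - 3 * k) / ((4 * κ + 3 * k) * (κ + 3 * k)))
    (C2 : ℝ) (hC2 : C2 = 4 * (κ + 3 * k) / (4 * κ + 3 * k))
    (za : Fin h → ℝ) (hza : za = fun a => (3 * κa a / (4 * κ')) * C')
    (ntilde0 : ℝ) (hntilde0 : ntilde0 ≠ 0)
    (hRe : ∀ a, 2 * (∑ b, m b * za b) * z a / C' ^ 2
      + 3 * ntilde0 * z a / (C' * κ') = m a) :
    (∀ a, z a = -(κ' / (6 * ntilde0)) * C2 * m a)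
    ∧ κ = -(κm / (6 * ntilde0) ^ 3) * κ' ^ 3 * C2 ^ 3
    ∧ ∑ b, m b * za b = -(9 * ntilde0 / (2 * κ')) * C1 :=
  lcs_m0_zero_saxion_solution_general h d k m z κ hκ κa hκa κm hκm κ' hκ' hκ'pos C' hC' hC'ne hκ3k
    C1 hC1 C2 hC2 za hza ntilde0 hntilde0 hRe
end

section
/- In the large complex structure setting with $m^0 = 0$, $\tilde{n}_0 \neq 0$, and the F-term solution $z^a = -\frac{\kappa'}{6\tilde{n}_0} C_2 m^a$ (with $C_2 = \frac{4(\kappa+3k)}{4\kappa+3k}$), the real part of the superpotential evaluates to $\mathrm{Re}(\hat{W}) = -\frac{2w}{3}\left(1 + \frac{3k}{4\kappa}\right) \kappa(m)^{1/3} \kappa^{2/3}$, where $\kappa(m) = d_{abc} m^a m^b m^c$ and $\mathrm{Re}(\hat{W}) = w\left[\tilde{n}_0 - \frac{2\kappa'}{3C'} m^b z_b\right]$ on axion solutions of $M_{ab}\chi^b = n'_a$. -/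
/-- In the `m⁰ = 0`, `ñ₀ ≠ 0` branch, with the F-term solution
`z^a = -(κ'/(6ñ₀)) C₂ m^a` and the sign convention
`ñ₀ = -(C₂/6) κ(m)^{1/3} κ'/κ^{1/3}` (cube roots `r³ = κ(m)`, `s³ = κ`, `s > 0`),
the real part of the superpotential, `Re Ŵ = w[ñ₀ - (2κ'/(3C')) m^b z_b]`,
evaluates to `Re Ŵ = -(2w/3)(1 + 3k/(4κ)) κ(m)^{1/3} κ^{2/3}`. -/
theorem lcs_m0_zero_re_W_value
    (h : ℕ) (d : Fin h → Fin h → Fin h → ℝ)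
    (hd : ∀ a b c, d a b c = d b a c ∧ d a b c = d a c b)
    (k w n0' : ℝ) (n' m : Fin h → ℝ) (z χ : Fin h → ℝ)
    (κ : ℝ) (hκ : κ = ∑ a, ∑ b, ∑ e, d a b e * z a * z b * z e) (hκpos : 0 < κ)
    (κa : Fin h → ℝ) (hκa : κa = fun a => ∑ b, ∑ e, d a b e * z b * z e)
    (κm : ℝ) (hκm : κm = ∑ a, ∑ b, ∑ e, d a b e * m a * m b * m e)
    (κ' : ℝ) (hκ' : κ' = κ + 3 * k / 4) (hκ'pos : 0 < κ')
    (C' : ℝ) (hC' : C' = 1 - 9 * k / (4 * κ')) (hC'ne : C' ≠ 0)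
    (h4κ3k : 4 * κ + 3 * k ≠ 0)
    (C2 : ℝ) (hC2 : C2 = 4 * (κ + 3 * k) / (4 * κ + 3 * k))
    (za : Fin h → ℝ) (hza : za = fun a => (3 * κa a / (4 * κ')) * C')
    (r s : ℝ) (hr : r ^ 3 = κm) (hs : s ^ 3 = κ) (hspos : 0 < s)
    (ntilde0 : ℝ) (hntilde0def : ntilde0 = n0' - (1 / 2) * ∑ a, n' a * χ a)
    (hntilde0ne : ntilde0 ≠ 0)
    (hn0conv : ntilde0 = -(C2 / 6) * (r * κ' / s))
    (hzsol : ∀ a, z a = -(κ' / (6 * ntilde0)) * C2 * m a)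
    (ReW : ℝ) (hReW : ReW = w * (ntilde0 - (2 * κ' / (3 * C')) * ∑ b, m b * za b)) :
    ReW = -(2 * w / 3) * (1 + 3 * k / (4 * κ)) * r * s ^ 2 := by
  have hsne : s ≠ 0 := ne_of_gt hspos
  have hκ'ne : κ' ≠ 0 := ne_of_gt hκ'pos
  have hκne : κ ≠ 0 := ne_of_gt hκpos
  have hC2ne : C2 ≠ 0 := by
    intro h0; apply hntilde0ne; rw [hn0conv, h0]; ring
  have hrne : r ≠ 0 := by
    intro h0; apply hntilde0ne; rw [hn0conv, h0]; ring
  -- z = (s/r) m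
  have hz : ∀ a, z a = (s / r) * m a := by
    intro a
    rw [hzsol a, hn0conv]
    field_simp
  -- key sum
  have key : ∑ b, m b * κa b = s ^ 2 * r := by
    rw [hκa]
    have : ∑ b, m b * (∑ e, ∑ f, d b e f * z e * z f)
        = (s / r) ^ 2 * ∑ b, ∑ e, ∑ f, d b e f * m b * m e * m f := by
      rw [Finset.mul_sum]
      refine Finset.sum_congr rfl fun b _ => ?_
      rw [Finset.mul_sum, Finset.mul_sum]
      refine Finset.sum_congr rfl fun e _ => ?_
      rw [Finset.mul_sum, Finset.mul_sum]
      refine Finset.sum_congr rfl fun f _ => ?_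
      rw [hz e, hz f]; ring
    simp only at this ⊢
    rw [this, ← hκm, ← hr]
    field_simp
  have hsum : ∑ b, m b * za b = (3 * C' / (4 * κ')) * (s ^ 2 * r) := by
    rw [hza]
    simp only
    rw [← key, Finset.mul_sum]
    refine Finset.sum_congr rfl fun b _ => ?_
    field_simp
  have hc : 2 * κ' / (3 * C') * (3 * C' / (4 * κ') * (s ^ 2 * r)) = s ^ 2 * r / 2 := by
    field_simp; ring
  rw [hReW, hsum, hc, hn0conv, hC2, hκ', ← hs]
  have h4 : 4 * s ^ 3 + 3 * k ≠ 0 := by rw [hs]; exact h4κ3k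
  field_simp
  ring
end

section
/- Let $\mathcal{F}(\mathcal{Z}) = -\frac{1}{6}\frac{\tilde{d}_{abc}\mathcal{Z}^a\mathcal{Z}^b\mathcal{Z}^c}{\mathcal{Z}^0} + \frac{1}{2}\tilde{a}_{ab}\mathcal{Z}^a\mathcal{Z}^b + \tilde{b}_a \mathcal{Z}^a \mathcal{Z}^0 + \frac{1}{2}\tilde{c}(\mathcal{Z}^0)^2$ on the region $\mathcal{Z}^0 \neq 0$, with $\tilde{d}_{abc}$ real symmetric, $\tilde{a}_{ab}$, $\tilde{b}_a$ real, and $\tilde{c}$ complex. Then $\mathcal{F}$ is holomorphic and homogeneous of degree two, and in affine coordinates $Z^a = \mathcal{Z}^a/\mathcal{Z}^0$, after the substitution $Z^a \mapsto i Z^a$, the Kähler potential $K = -\log[i(\bar{\mathcal{Z}}^A \mathcal{F}_A - \mathcal{Z}^A \bar{\mathcal{F}}_A)]$ restricted to $\mathcal{Z}^0 = 1$ equals $\hat{K} = -\log\left(\frac{4}{3}\tilde{\kappa} + k\right)$, where $\tilde{\kappa} = \tilde{d}_{abc} z^a z^b z^c$ with $z^a = \mathrm{Re}(Z^a)$, and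 $k = i(\tilde{c} - \bar{\tilde{c}})$. -/
open Finset

private noncomputable def lcsT {h : ℕ} (d : Fin h → Fin h → Fin h → ℝ) (f g k : Fin h → ℂ) : ℂ :=
  ∑ a, ∑ b, ∑ c, (d a b c : ℂ) * f a * g b * k c
private lemma lcsT_swap12 {h : ℕ} (d : Fin h → Fin h → Fin h → ℝ)
    (hd1 : ∀ a b c, d a b c = d b a c) (f g k : Fin h → ℂ) :
    lcsT d f g k = lcsT d g f k := by
  simp only [lcsT]
  rw [Finset.sum_comm]
  refine Finset.sum_congr rfl fun a _ => Finset.sum_congr rfl fun b _ =>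
    Finset.sum_congr rfl fun c _ => ?_
  rw [hd1 b a c]; ring

private lemma lcsT_swap23 {h : ℕ} (d : Fin h → Fin h → Fin h → ℝ)
    (hd2 : ∀ a b c, d a b c = d a c b) (f g k : Fin h → ℂ) :
    lcsT d f g k = lcsT d f k g := by
  simp only [lcsT]
  refine Finset.sum_congr rfl fun a _ => ?_
  rw [Finset.sum_comm]
  refine Finset.sum_congr rfl fun b _ => Finset.sum_congr rfl fun c _ => ?_
  rw [hd2 a b c]; ring

private lemma lcsT_expand {h : ℕ} (d : Fin h → Fin h → Fin h → ℝ) (u v : Fin h → ℂ)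
    (α β γ δ ε ζ : ℂ) :
    lcsT d (fun a => α * u a + β * v a) (fun a => γ * u a + δ * v a)
      (fun a => ε * u a + ζ * v a)
    = α * γ * ε * lcsT d u u u + α * γ * ζ * lcsT d u u v + α * δ * ε * lcsT d u v u
      + β * γ * ε * lcsT d v u u + α * δ * ζ * lcsT d u v v + β * γ * ζ * lcsT d v u v
      + β * δ * ε * lcsT d v v u + β * δ * ζ * lcsT d v v v := by
  simp only [lcsT]
  have e : ∀ a b c : Fin h,
      (d a b c : ℂ) * (α * u a + β * v a) * (γ * u b + δ * v b) * (ε * u c + ζ * v c)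
      = α * γ * ε * ((d a b c : ℂ) * u a * u b * u c)
      + α * γ * ζ * ((d a b c : ℂ) * u a * u b * v c)
      + α * δ * ε * ((d a b c : ℂ) * u a * v b * u c)
      + β * γ * ε * ((d a b c : ℂ) * v a * u b * u c)
      + α * δ * ζ * ((d a b c : ℂ) * u a * v b * v c)
      + β * γ * ζ * ((d a b c : ℂ) * v a * u b * v c)
      + β * δ * ε * ((d a b c : ℂ) * v a * v b * u c)
      + β * δ * ζ * ((d a b c : ℂ) * v a * v b * v c) := by
    intro a b c; ring
  simp only [e, Finset.sum_add_distrib, ← Finset.mul_sum]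

private lemma lcs_aux {h : ℕ} (d : Fin h → Fin h → Fin h → ℝ)
    (hd1 : ∀ a b c, d a b c = d b a c) (hd2 : ∀ a b c, d a b c = d a c b)
    (s : Fin h → Fin h → ℂ) (bt : Fin h → ℂ) (ct ct' : ℂ)
    (u v w w' : Fin h → ℂ)
    (hw : ∀ a, w a = -1 * u a + Complex.I * v a)
    (hw' : ∀ a, w' a = -1 * u a + -Complex.I * v a) :
    Complex.I * (((1 / 6) * (∑ a, ∑ b, ∑ c, (d a b c : ℂ) * w a * w b * w c)
        + (∑ a, bt a * w a) + ct
      - ((1 / 6) * (∑ a, ∑ b, ∑ c, (d a b c : ℂ) * w' a * w' b * w' c)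
        + (∑ a, bt a * w' a) + ct'))
      + ∑ a, (w' a * (-(1 / 2) * (∑ b, ∑ c, (d a b c : ℂ) * w b * w c)
            + (∑ b, (1 / 2) * (s a b + s b a) * w b) + bt a)
          - w a * (-(1 / 2) * (∑ b, ∑ c, (d a b c : ℂ) * w' b * w' c)
            + (∑ b, (1 / 2) * (s a b + s b a) * w' b) + bt a)))
    = 4 / 3 * (∑ a, ∑ b, ∑ c, (d a b c : ℂ) * v a * v b * v c)
      + Complex.I * (ct - ct') := by
  have hwf : w = fun a => (-1 : ℂ) * u a + Complex.I * v a := funext hw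
  have hw'f : w' = fun a => (-1 : ℂ) * u a + -Complex.I * v a := funext hw'
  have hBa : lcsT d u v u = lcsT d u u v := lcsT_swap23 d hd2 u v u
  have hBb : lcsT d v u u = lcsT d u u v := by rw [lcsT_swap12 d hd1, hBa]
  have hCa : lcsT d v u v = lcsT d u v v := lcsT_swap12 d hd1 v u v
  have hCb : lcsT d v v u = lcsT d u v v := by rw [lcsT_swap23 d hd2, hCa]
  have eP : (∑ a, ∑ b, ∑ c, (d a b c : ℂ) * w a * w b * w c)
      = -(lcsT d u u u) + 3 * Complex.I * lcsT d u u v + 3 * lcsT d u v v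
        - Complex.I * lcsT d v v v := by
    show lcsT d w w w = _
    rw [hwf, lcsT_expand d u v (-1) Complex.I (-1) Complex.I (-1) Complex.I,
      hBa, hBb, hCa, hCb]
    linear_combination (-3 * lcsT d u v v + Complex.I * lcsT d v v v) * Complex.I_sq
  have eP' : (∑ a, ∑ b, ∑ c, (d a b c : ℂ) * w' a * w' b * w' c)
      = -(lcsT d u u u) - 3 * Complex.I * lcsT d u u v + 3 * lcsT d u v v
        + Complex.I * lcsT d v v v := by
    show lcsT d w' w' w' = _
    rw [hw'f, lcsT_expand d u v (-1) (-Complex.I) (-1) (-Complex.I) (-1) (-Complex.I),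
      hBa, hBb, hCa, hCb]
    linear_combination (-3 * lcsT d u v v - Complex.I * lcsT d v v v) * Complex.I_sq
  have eQ : lcsT d w' w w
      = -(lcsT d u u u) + Complex.I * lcsT d u u v - lcsT d u v v
        + Complex.I * lcsT d v v v := by
    rw [hwf, hw'f, lcsT_expand d u v (-1) (-Complex.I) (-1) Complex.I (-1) Complex.I,
      hBa, hBb, hCa, hCb]
    linear_combination (lcsT d u v v - Complex.I * lcsT d v v v) * Complex.I_sq
  have eQ2 : lcsT d w w' w'
      = -(lcsT d u u u) - Complex.I * lcsT d u u v - lcsT d u v v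
        - Complex.I * lcsT d v v v := by
    rw [hwf, hw'f, lcsT_expand d u v (-1) Complex.I (-1) (-Complex.I) (-1) (-Complex.I),
      hBa, hBb, hCa, hCb]
    linear_combination (lcsT d u v v + Complex.I * lcsT d v v v) * Complex.I_sq
  have e1 : ∀ a : Fin h,
      (w' a * (-(1 / 2) * (∑ b, ∑ c, (d a b c : ℂ) * w b * w c)
            + (∑ b, (1 / 2) * (s a b + s b a) * w b) + bt a)
          - w a * (-(1 / 2) * (∑ b, ∑ c, (d a b c : ℂ) * w' b * w' c)
            + (∑ b, (1 / 2) * (s a b + s b a) * w' b) + bt a))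
      = -(1 / 2) * (w' a * ∑ b, ∑ c, (d a b c : ℂ) * w b * w c)
        + (∑ b, (1 / 2) * (s a b + s b a) * (w' a * w b))
        + bt a * w' a
        + (1 / 2) * (w a * ∑ b, ∑ c, (d a b c : ℂ) * w' b * w' c)
        - (∑ b, (1 / 2) * (s a b + s b a) * (w a * w' b))
        - bt a * w a := by
    intro a
    have m1 : w' a * (∑ b, (1 / 2) * (s a b + s b a) * w b)
        = ∑ b, (1 / 2) * (s a b + s b a) * (w' a * w b) := by
      rw [Finset.mul_sum]; exact Finset.sum_congr rfl fun b _ => by ring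
    have m2 : w a * (∑ b, (1 / 2) * (s a b + s b a) * w' b)
        = ∑ b, (1 / 2) * (s a b + s b a) * (w a * w' b) := by
      rw [Finset.mul_sum]; exact Finset.sum_congr rfl fun b _ => by ring
    linear_combination m1 - m2
  have eq1 : (∑ a, w' a * (∑ b, ∑ c, (d a b c : ℂ) * w b * w c)) = lcsT d w' w w := by
    refine Finset.sum_congr rfl fun a _ => ?_
    rw [Finset.mul_sum]
    refine Finset.sum_congr rfl fun b _ => ?_
    rw [Finset.mul_sum]
    exact Finset.sum_congr rfl fun c _ => by ring
  have eq2 : (∑ a, w a * (∑ b, ∑ c, (d a b c : ℂ) * w' b * w' c)) = lcsT d w w' w' := by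
    refine Finset.sum_congr rfl fun a _ => ?_
    rw [Finset.mul_sum]
    refine Finset.sum_congr rfl fun b _ => ?_
    rw [Finset.mul_sum]
    exact Finset.sum_congr rfl fun c _ => by ring
  have eS : (∑ a, ∑ b, (1 / 2) * (s a b + s b a) * (w a * w' b))
      = (∑ a, ∑ b, (1 / 2) * (s a b + s b a) * (w' a * w b)) := by
    rw [Finset.sum_comm]
    exact Finset.sum_congr rfl fun b _ => Finset.sum_congr rfl fun a _ => by ring
  rw [show (∑ a, ∑ b, ∑ c, (d a b c : ℂ) * v a * v b * v c) = lcsT d v v v from rfl]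
  simp only [e1]
  simp only [Finset.sum_add_distrib, Finset.sum_sub_distrib, ← Finset.mul_sum]
  rw [eq1, eq2, eS, eP, eP', eQ, eQ2]
  linear_combination (-(4 / 3 : ℂ) * lcsT d v v v) * Complex.I_sq

/-- The large complex structure prepotential
`𝓕(𝒵) = -(1/6) d_{abc}𝒵^a𝒵^b𝒵^c/𝒵⁰ + ½ ã_{ab}𝒵^a𝒵^b + b̃_a 𝒵^a 𝒵⁰ + ½ c̃ (𝒵⁰)²`
is holomorphic on `{𝒵⁰ ≠ 0}` and homogeneous of degree two, and in affine
coordinates `𝒵⁰ = 1`, `𝒵^a = iZ^a` with `Z^a = z^a + iχ^a`, the Kähler potential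
argument satisfies `i(𝒵̄^A 𝓕_A - 𝒵^A 𝓕̄_A) = (4/3) d_{abc} z^a z^b z^c + i(c̃ - c̃*)`. -/
theorem lcs_prepotential_and_kahler_potential
    (h : ℕ) (d : Fin h → Fin h → Fin h → ℝ)
    (hd : ∀ a b c, d a b c = d b a c ∧ d a b c = d a c b)
    (atil : Fin h → Fin h → ℝ) (btil : Fin h → ℝ) (ctil : ℂ)
    (F : (ℂ × (Fin h → ℂ)) → ℂ)
    (hF : F = fun p =>
      -(1 / 6) * (∑ a, ∑ b, ∑ c, (d a b c : ℂ) * p.2 a * p.2 b * p.2 c) / p.1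
      + (1 / 2) * ∑ a, ∑ b, (atil a b : ℂ) * p.2 a * p.2 b
      + (∑ a, (btil a : ℂ) * p.2 a) * p.1
      + (1 / 2) * ctil * p.1 ^ 2)
    (z χ : Fin h → ℝ)
    (Za : Fin h → ℂ) (hZa : Za = fun a => Complex.I * ((z a : ℂ) + (χ a : ℂ) * Complex.I))
    (F0v : ℂ)
    (hF0v : F0v = (1 / 6) * (∑ a, ∑ b, ∑ c, (d a b c : ℂ) * Za a * Za b * Za c)
      + (∑ a, (btil a : ℂ) * Za a) + ctil)
    (Fav : Fin h → ℂ)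
    (hFav : Fav = fun a => -(1 / 2) * (∑ b, ∑ c, (d a b c : ℂ) * Za b * Za c)
      + (∑ b, (1 / 2) * ((atil a b : ℂ) + (atil b a : ℂ)) * Za b)
      + (btil a : ℂ)) :
    (∀ p : ℂ × (Fin h → ℂ), p.1 ≠ 0 → DifferentiableAt ℂ F p)
    ∧ (∀ l : ℂ, l ≠ 0 → ∀ p : ℂ × (Fin h → ℂ), p.1 ≠ 0 → F (l • p) = l ^ 2 * F p)
    ∧ Complex.I * ((F0v - (starRingEnd ℂ) F0v)
        + ∑ a, ((starRingEnd ℂ) (Za a) * Fav a - Za a * (starRingEnd ℂ) (Fav a)))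
      = ((4 / 3) * (∑ a, ∑ b, ∑ c, d a b c * z a * z b * z c) : ℝ)
        + Complex.I * (ctil - (starRingEnd ℂ) ctil) := by

  subst hF
  refine ⟨?_, ?_, ?_⟩
  · intro p hp
    have hsnd : ∀ a, DifferentiableAt ℂ (fun p : ℂ × (Fin h → ℂ) => p.2 a) p :=
      fun a => ((differentiable_pi.mp differentiable_snd a) p)
    have S3 : DifferentiableAt ℂ (fun p : ℂ × (Fin h → ℂ) =>
        ∑ a, ∑ b, ∑ c, (d a b c : ℂ) * p.2 a * p.2 b * p.2 c) p := by
      apply DifferentiableAt.fun_sum; intro a _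
      apply DifferentiableAt.fun_sum; intro b _
      apply DifferentiableAt.fun_sum; intro c _
      exact (((differentiableAt_const _).mul (hsnd a)).mul (hsnd b)).mul (hsnd c)
    have S2 : DifferentiableAt ℂ (fun p : ℂ × (Fin h → ℂ) =>
        ∑ a, ∑ b, (atil a b : ℂ) * p.2 a * p.2 b) p := by
      apply DifferentiableAt.fun_sum; intro a _
      apply DifferentiableAt.fun_sum; intro b _
      exact ((differentiableAt_const _).mul (hsnd a)).mul (hsnd b)
    have S1 : DifferentiableAt ℂ (fun p : ℂ × (Fin h → ℂ) => ∑ a, (btil a : ℂ) * p.2 a) p := by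
      apply DifferentiableAt.fun_sum; intro a _
      exact (differentiableAt_const _).mul (hsnd a)
    have hfst : DifferentiableAt ℂ (fun p : ℂ × (Fin h → ℂ) => p.1) p := differentiableAt_fst
    apply DifferentiableAt.add
    apply DifferentiableAt.add
    apply DifferentiableAt.add
    · simp only [div_eq_mul_inv]
      exact ((differentiableAt_const _).mul S3).mul (hfst.inv hp)
    · exact (differentiableAt_const _).mul S2
    · exact S1.mul hfst
    · exact ((differentiableAt_const _).mul (differentiableAt_const _)).mul (hfst.pow 2)
  · intro l hl p hp
    have h1 : (l • p).1 = l * p.1 := rfl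
    have h2 : ∀ a, (l • p).2 a = l * p.2 a := fun a => rfl
    simp only [h1, h2]
    have e3 : (∑ a, ∑ b, ∑ c, (d a b c : ℂ) * (l * p.2 a) * (l * p.2 b) * (l * p.2 c))
        = l ^ 3 * ∑ a, ∑ b, ∑ c, (d a b c : ℂ) * p.2 a * p.2 b * p.2 c := by
      rw [Finset.mul_sum]
      refine Finset.sum_congr rfl fun a _ => ?_
      rw [Finset.mul_sum]
      refine Finset.sum_congr rfl fun b _ => ?_
      rw [Finset.mul_sum]
      refine Finset.sum_congr rfl fun c _ => ?_
      ring
    have e2 : (∑ a, ∑ b, (atil a b : ℂ) * (l * p.2 a) * (l * p.2 b))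
        = l ^ 2 * ∑ a, ∑ b, (atil a b : ℂ) * p.2 a * p.2 b := by
      rw [Finset.mul_sum]
      refine Finset.sum_congr rfl fun a _ => ?_
      rw [Finset.mul_sum]
      refine Finset.sum_congr rfl fun b _ => ?_
      ring
    have e1 : (∑ a, (btil a : ℂ) * (l * p.2 a)) = l * ∑ a, (btil a : ℂ) * p.2 a := by
      rw [Finset.mul_sum]
      refine Finset.sum_congr rfl fun a _ => ?_
      ring
    rw [e3, e2, e1]
    rw [show l ^ 3 = l * l ^ 2 by ring]
    rw [show -(1/6 : ℂ) * (l * l ^ 2 * ∑ a, ∑ b, ∑ c, (d a b c : ℂ) * p.2 a * p.2 b * p.2 c) / (l * p.1)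
        = l ^ 2 * (-(1/6) * (∑ a, ∑ b, ∑ c, (d a b c : ℂ) * p.2 a * p.2 b * p.2 c) / p.1) by
      rw [mul_comm l p.1, ← mul_div_mul_right _ p.1 hl]
      ring_nf]
    ring
  · have hd1 : ∀ a b c, d a b c = d b a c := fun a b c => (hd a b c).1
    have hd2 : ∀ a b c, d a b c = d a c b := fun a b c => (hd a b c).2
    have hw : ∀ a, Za a = -1 * (χ a : ℂ) + Complex.I * (z a : ℂ) := by
      intro a; rw [hZa]
      linear_combination ((χ a : ℂ)) * Complex.I_sq
    have hw' : ∀ a, (starRingEnd ℂ) (Za a) = -1 * (χ a : ℂ) + -Complex.I * (z a : ℂ) := by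
      intro a; rw [hZa]
      simp only [map_mul, map_add, Complex.conj_I, Complex.conj_ofReal]
      linear_combination ((χ a : ℂ)) * Complex.I_sq
    have hc0 : (starRingEnd ℂ) F0v
        = (1 / 6) * (∑ a, ∑ b, ∑ c, (d a b c : ℂ) * (starRingEnd ℂ) (Za a)
            * (starRingEnd ℂ) (Za b) * (starRingEnd ℂ) (Za c))
          + (∑ a, (btil a : ℂ) * (starRingEnd ℂ) (Za a)) + (starRingEnd ℂ) ctil := by
      rw [hF0v]
      simp only [map_add, map_mul, map_sum, map_div₀, map_one, map_ofNat, Complex.conj_ofReal]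
    have hcA : ∀ a, (starRingEnd ℂ) (Fav a)
        = -(1 / 2) * (∑ b, ∑ c, (d a b c : ℂ) * (starRingEnd ℂ) (Za b) * (starRingEnd ℂ) (Za c))
          + (∑ b, (1 / 2) * ((atil a b : ℂ) + (atil b a : ℂ)) * (starRingEnd ℂ) (Za b))
          + (btil a : ℂ) := by
      intro a
      simp only [hFav]
      simp only [map_add, map_mul, map_sum, map_neg, map_div₀, map_one, map_ofNat,
        Complex.conj_ofReal]
    have hR : (((4 / 3) * (∑ a, ∑ b, ∑ c, d a b c * z a * z b * z c) : ℝ) : ℂ)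
        = 4 / 3 * (∑ a, ∑ b, ∑ c, (d a b c : ℂ) * (z a : ℂ) * (z b : ℂ) * (z c : ℂ)) := by
      push_cast
      ring
    rw [hc0, hF0v, hR]
    simp only [hcA]
    simp only [hFav]
    exact lcs_aux d hd1 hd2 (fun a b => ((atil a b : ℂ))) (fun a => (btil a : ℂ)) ctil
      ((starRingEnd ℂ) ctil) (fun a => ((χ a : ℂ))) (fun a => ((z a : ℂ)))
      Za (fun a => (starRingEnd ℂ) (Za a)) hw hw'
end
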